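/- Fix integers n ≥ 2 and N ≥ 1, maps f : ℝ^(2n−1) × ℝ → ℝ and ĉ : ℝ × ℝ^(2n−1) → ℝ, a dataset of triples (y_i⁺, ζ_i, u_i) ∈ ℝ × ℝ^(2n−1) × ℝ, i = 1,…,N, a class-K∞ function γ such that ‖ζ_i⁺ − Φ(ζ, y_i⁺)‖ ≤ γ(‖ζ_i − ζ‖) for every i and every ζ ∈ ℝ^(2n−1), and δ > 0. Suppose a sequence of sets (A^j)_{j≥0} in ℝ^(2n−1) is constructed as follows: A⁰ = ⋃_{i ∈ I₀} B̄(ζ_i⁺, r⁰_i) where I₀ ⊆ {1,…,N} and each radius r⁰_i ≥ 0 satisfies B̄(ζ_i⁺, r⁰_i) ⊆ S_δ; and for each j ≥ 0, A^{j+1} = ⋃_{i ∈ I_{j+1}} B̄(ζ_i, γ⁻¹(r^{j+1}_i)) where I_{j+1} ⊆ {1,…,N} and each radius r^{j+1}_i ≥ 0 satisfies B̄(ζ_i⁺, r^{j+1}_i) ⊆ A^j. Then A⁰ ⊆ S_δ and A^{j+1} ⊆ R⁻(A^j) for every j ≥ 0. -/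

import Mathlib

/-- The closed-loop one-step map with reference `yr`:
`Φ(ζ, yr) = (y₂,…,yₙ, f(ζ, ĉ(yr, ζ)), u₂,…,u_{n−1}, ĉ(yr, ζ))` for the augmented
state `ζ = (y₁,…,yₙ,u₁,…,u_{n−1}) ∈ ℝ^(2n−1)` (0-indexed coordinates). -/
noncomputable def Phi (n : ℕ) (f : EuclideanSpace ℝ (Fin (2*n-1)) → ℝ → ℝ)
    (chat : ℝ → EuclideanSpace ℝ (Fin (2*n-1)) → ℝ)
    (ζ : EuclideanSpace ℝ (Fin (2*n-1))) (yr : ℝ) : EuclideanSpace ℝ (Fin (2*n-1)) :=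
  WithLp.toLp 2 fun (k : Fin (2*n-1)) =>
    if (k : ℕ) = n - 1 then f ζ (chat yr ζ)
    else if h : (k : ℕ) = 2*n - 2 then chat yr ζ
    else ζ ⟨(k : ℕ) + 1, by have := k.isLt; omega⟩

/-- For a data triple `(y_i⁺, ζ_i, u_i)`, the shifted successor state
`ζ_i⁺ = (y_{i,2},…,y_{i,n}, y_i⁺, u_{i,2},…,u_{i,n−1}, u_i)`. -/
noncomputable def zplus (n : ℕ) (yp : ℝ) (ζ : EuclideanSpace ℝ (Fin (2*n-1))) (ui : ℝ) :
    EuclideanSpace ℝ (Fin (2*n-1)) :=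
  WithLp.toLp 2 fun (k : Fin (2*n-1)) =>
    if (k : ℕ) = n - 1 then yp
    else if h : (k : ℕ) = 2*n - 2 then ui
    else ζ ⟨(k : ℕ) + 1, by have := k.isLt; omega⟩

/-- Backward reachable set `R⁻(A) = {ζ : ∃ i, Φ(ζ, y_i⁺) ∈ A}`. -/
def Rminus (n N : ℕ) (f : EuclideanSpace ℝ (Fin (2*n-1)) → ℝ → ℝ)
    (chat : ℝ → EuclideanSpace ℝ (Fin (2*n-1)) → ℝ) (yd : Fin N → ℝ)
    (A : Set (EuclideanSpace ℝ (Fin (2*n-1)))) : Set (EuclideanSpace ℝ (Fin (2*n-1))) :=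
  {ζ | ∃ i : Fin N, Phi n f chat ζ (yd i) ∈ A}

/-- `S_δ = {ζ : |ζₙ| ≤ δ}` (the n-th coordinate is index `n-1`, 0-indexed). -/
def Sdelta (n : ℕ) (hn : 1 ≤ n) (δ : ℝ) : Set (EuclideanSpace ℝ (Fin (2*n-1))) :=
  {ζ | |ζ ⟨n - 1, by omega⟩| ≤ δ}

open Metric Set

theorem mapsTo_closedBall_of_dist_le_comp {X Y : Type*} [PseudoMetricSpace X]
    [PseudoMetricSpace Y] {g : X → Y} {γ : ℝ → ℝ} {x : X} {y : Y} {s : ℝ}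
    (hγ : MonotoneOn γ (Ici 0)) (hs : 0 ≤ s) (hg : ∀ z, dist y (g z) ≤ γ (dist x z)) :
    MapsTo g (closedBall x s) (closedBall y (γ s)) := fun z hz =>
  mem_closedBall_comm.mp <|
    (hg z).trans (hγ dist_nonneg hs (mem_closedBall_comm.mp hz))

theorem subset_Rminus_of_mapsTo {n N : ℕ} {f : EuclideanSpace ℝ (Fin (2*n-1)) → ℝ → ℝ}
    {chat : ℝ → EuclideanSpace ℝ (Fin (2*n-1)) → ℝ} {yd : Fin N → ℝ}
    {s A : Set (EuclideanSpace ℝ (Fin (2*n-1)))} (i : Fin N)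
    (h : MapsTo (fun ζ => Phi n f chat ζ (yd i)) s A) :
    s ⊆ Rminus n N f chat yd A :=
  fun _ hζ => ⟨i, h hζ⟩

/-- Proposition 3: the recursively constructed sets
`A⁰ = ⋃_{i∈I₀} B̄(ζ_i⁺, r⁰_i)` (balls inside `S_δ`) and
`A^{j+1} = ⋃_{i∈I_{j+1}} B̄(ζ_i, γ⁻¹(r^{j+1}_i))` (with `B̄(ζ_i⁺, r^{j+1}_i) ⊆ A^j`)
satisfy the defining property `A⁰ ⊆ S_δ` and `A^{j+1} ⊆ R⁻(A^j)`. -/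
theorem stmt_4 (n N : ℕ) (hn : 2 ≤ n)
    (f : EuclideanSpace ℝ (Fin (2*n-1)) → ℝ → ℝ)
    (chat : ℝ → EuclideanSpace ℝ (Fin (2*n-1)) → ℝ)
    (yd : Fin N → ℝ) (ζd : Fin N → EuclideanSpace ℝ (Fin (2*n-1))) (ud : Fin N → ℝ)
    (γ γinv : ℝ → ℝ)
    (hγ_mono : StrictMonoOn γ (Set.Ici (0:ℝ)))
    (hγinv_nonneg : ∀ r, 0 ≤ r → 0 ≤ γinv r)
    (hγinv_right : ∀ r, 0 ≤ r → γ (γinv r) = r)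
    (hγ_bound : ∀ (i : Fin N) (ζ : EuclideanSpace ℝ (Fin (2*n-1))),
      ‖zplus n (yd i) (ζd i) (ud i) - Phi n f chat ζ (yd i)‖ ≤ γ ‖ζd i - ζ‖)
    (δ : ℝ)
    (A : ℕ → Set (EuclideanSpace ℝ (Fin (2*n-1))))
    (I : ℕ → Set (Fin N)) (r : ℕ → Fin N → ℝ)
    (hr : ∀ j i, 0 ≤ r j i)
    (hA0 : A 0 = ⋃ i ∈ I 0, Metric.closedBall (zplus n (yd i) (ζd i) (ud i)) (r 0 i))
    (hball0 : ∀ i ∈ I 0,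
      Metric.closedBall (zplus n (yd i) (ζd i) (ud i)) (r 0 i) ⊆ Sdelta n (by omega) δ)
    (hAsucc : ∀ j : ℕ,
      A (j+1) = ⋃ i ∈ I (j+1), Metric.closedBall (ζd i) (γinv (r (j+1) i)))
    (hballsucc : ∀ (j : ℕ), ∀ i ∈ I (j+1),
      Metric.closedBall (zplus n (yd i) (ζd i) (ud i)) (r (j+1) i) ⊆ A j) :
    A 0 ⊆ Sdelta n (by omega) δ ∧
    ∀ j : ℕ, A (j+1) ⊆ Rminus n N f chat yd (A j) := by
  refine ⟨hA0 ▸ iUnion₂_subset hball0, fun j => ?_⟩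
  rw [hAsucc j]
  refine iUnion₂_subset fun i hi => subset_Rminus_of_mapsTo i ?_
  have hρ := hr (j + 1) i
  have hmaps := mapsTo_closedBall_of_dist_le_comp (g := fun ζ => Phi n f chat ζ (yd i))
    hγ_mono.monotoneOn (hγinv_nonneg _ hρ) fun ζ => by
      simpa only [dist_eq_norm] using hγ_bound i ζ
  rw [hγinv_right _ hρ] at hmaps
  exact hmaps.mono_right (hballsucc j i hi)
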